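/- arXiv:2510.22188 — 2 statements merged into one kernel-verified Lean document; each statement's English description precedes it below -/
import Mathlib

section
/- Let u, v : ℝ × ℝ → ℝ be twice continuously differentiable functions of (ξ,τ). For λ ∈ ℂ∖{0} define the 3×3 complex matrices U(ξ,τ,λ) = [[u_ξ+v_ξ, λ, 0],[0, −2v_ξ, λ],[λ, 0, −u_ξ+v_ξ]] and V(ξ,τ,λ) = λ^{-1}·[[0, 0, e^{2u}],[e^{−u−3v}, 0, 0],[0, e^{3v−u}, 0]]. Then the zero-curvature equation ∂_τ U − ∂_ξ V + U·V − V·U = 0 holds at every point of ℝ² for every λ ∈ ℂ∖{0} if and only if (u,v) satisfies u_{ξτ} = e^{2u} − e^{−u}·cosh(3v) and v_{ξτ} = e^{−u}·sinh(3v) on ℝ². -/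
open Matrix

/-- Partial derivative in the first variable (`ξ`) of a real-valued function. -/
noncomputable def pdxi (f : ℝ × ℝ → ℝ) (p : ℝ × ℝ) : ℝ := fderiv ℝ f p (1, 0)

/-- Partial derivative in the second variable (`τ`) of a real-valued function. -/
noncomputable def pdtau (f : ℝ × ℝ → ℝ) (p : ℝ × ℝ) : ℝ := fderiv ℝ f p (0, 1)

/-- Entrywise partial derivative in `ξ` of a matrix-valued function. -/
noncomputable def pdxiM (F : ℝ × ℝ → Matrix (Fin 3) (Fin 3) ℂ) (p : ℝ × ℝ) :
    Matrix (Fin 3) (Fin 3) ℂ :=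
  Matrix.of fun i j => fderiv ℝ (fun q => F q i j) p (1, 0)

/-- Entrywise partial derivative in `τ` of a matrix-valued function. -/
noncomputable def pdtauM (F : ℝ × ℝ → Matrix (Fin 3) (Fin 3) ℂ) (p : ℝ × ℝ) :
    Matrix (Fin 3) (Fin 3) ℂ :=
  Matrix.of fun i j => fderiv ℝ (fun q => F q i j) p (0, 1)

/-- The matrix `U(ξ,τ,λ)` of the light-cone Lax pair. -/
noncomputable def Umat (u v : ℝ × ℝ → ℝ) (lam : ℂ) (p : ℝ × ℝ) :
    Matrix (Fin 3) (Fin 3) ℂ :=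
  !![((pdxi u p + pdxi v p : ℝ) : ℂ), lam, 0;
     0, ((-2 * pdxi v p : ℝ) : ℂ), lam;
     lam, 0, ((-pdxi u p + pdxi v p : ℝ) : ℂ)]

/-- The matrix `V(ξ,τ,λ)` of the light-cone Lax pair. -/
noncomputable def Vmat (u v : ℝ × ℝ → ℝ) (lam : ℂ) (p : ℝ × ℝ) :
    Matrix (Fin 3) (Fin 3) ℂ :=
  lam⁻¹ • !![0, 0, ((Real.exp (2 * u p) : ℝ) : ℂ);
             ((Real.exp (-u p - 3 * v p) : ℝ) : ℂ), 0, 0;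
             0, ((Real.exp (3 * v p - u p) : ℝ) : ℂ), 0]

lemma contDiff_pdxi {f : ℝ × ℝ → ℝ} (hf : ContDiff ℝ 2 f) : ContDiff ℝ 1 (pdxi f) := by
  have h1 : ContDiff ℝ 1 (fun q => fderiv ℝ f q) := hf.fderiv_right (by norm_num)
  exact h1.clm_apply contDiff_const

lemma fderiv_ofReal_comp {f : ℝ × ℝ → ℝ} {p : ℝ × ℝ} (hf : DifferentiableAt ℝ f p)
    (w : ℝ × ℝ) :
    fderiv ℝ (fun q => ((f q : ℝ) : ℂ)) p w = ((fderiv ℝ f p w : ℝ) : ℂ) := by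
  have h : fderiv ℝ (fun q => ((f q : ℝ) : ℂ)) p = Complex.ofRealCLM.comp (fderiv ℝ f p) :=
    (Complex.ofRealCLM.hasFDerivAt.comp p hf.hasFDerivAt).fderiv
  rw [h]; rfl

lemma zc_matrix (u v : ℝ × ℝ → ℝ) (hu : ContDiff ℝ 2 u) (hv : ContDiff ℝ 2 v)
    (p : ℝ × ℝ) (lam : ℂ) (hlam : lam ≠ 0) :
    pdtauM (Umat u v lam) p - pdxiM (Vmat u v lam) p
      + Umat u v lam p * Vmat u v lam p - Vmat u v lam p * Umat u v lam p
    = !![((pdtau (pdxi u) p + pdtau (pdxi v) p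
            + Real.exp (-u p - 3 * v p) - Real.exp (2 * u p) : ℝ) : ℂ), 0, 0;
         0, ((-2 * pdtau (pdxi v) p
            + Real.exp (3 * v p - u p) - Real.exp (-u p - 3 * v p) : ℝ) : ℂ), 0;
         0, 0, ((-pdtau (pdxi u) p + pdtau (pdxi v) p
            + Real.exp (2 * u p) - Real.exp (3 * v p - u p) : ℝ) : ℂ)] := by
  have hud : Differentiable ℝ u := hu.differentiable (by norm_num)
  have hvd : Differentiable ℝ v := hv.differentiable (by norm_num)
  have hux : Differentiable ℝ (pdxi u) := (contDiff_pdxi hu).differentiable (by norm_num)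
  have hvx : Differentiable ℝ (pdxi v) := (contDiff_pdxi hv).differentiable (by norm_num)
  -- derivative facts
  have F1 : fderiv ℝ (fun q => ((pdxi u q + pdxi v q : ℝ) : ℂ)) p (0, 1)
      = ((pdtau (pdxi u) p + pdtau (pdxi v) p : ℝ) : ℂ) := by
    rw [fderiv_ofReal_comp (f := fun q => pdxi u q + pdxi v q) ((hux p).add (hvx p))]
    rw [fderiv_fun_add (hux p) (hvx p)]; rfl
  have F2 : fderiv ℝ (fun q => ((-2 * pdxi v q : ℝ) : ℂ)) p (0, 1)
      = ((-2 * pdtau (pdxi v) p : ℝ) : ℂ) := by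
    rw [fderiv_ofReal_comp ((hvx p).const_mul (-2))]
    rw [fderiv_const_mul (hvx p) (-2)]; rfl
  have F3 : fderiv ℝ (fun q => ((-pdxi u q + pdxi v q : ℝ) : ℂ)) p (0, 1)
      = ((-pdtau (pdxi u) p + pdtau (pdxi v) p : ℝ) : ℂ) := by
    rw [fderiv_ofReal_comp (f := fun q => -pdxi u q + pdxi v q) (((hux p).neg).add (hvx p))]
    rw [fderiv_fun_add (f := fun q => -pdxi u q) ((hux p).neg) (hvx p), fderiv_fun_neg]; rfl
  have G1 : fderiv ℝ (fun q => ((Real.exp (2 * u q) : ℝ) : ℂ)) p (1, 0)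
      = ((Real.exp (2 * u p) * (2 * pdxi u p) : ℝ) : ℂ) := by
    rw [fderiv_ofReal_comp (((hud p).const_mul 2).exp)]
    rw [fderiv_exp ((hud p).const_mul 2), fderiv_const_mul (hud p) 2]
    simp [pdxi]
  have G2 : fderiv ℝ (fun q => ((Real.exp (-u q - 3 * v q) : ℝ) : ℂ)) p (1, 0)
      = ((Real.exp (-u p - 3 * v p) * (-pdxi u p - 3 * pdxi v p) : ℝ) : ℂ) := by
    rw [fderiv_ofReal_comp (f := fun q => Real.exp (-u q - 3 * v q)) (((hud p).neg.sub ((hvd p).const_mul 3)).exp)]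
    rw [fderiv_exp (f := fun q => -u q - 3 * v q) ((hud p).neg.sub ((hvd p).const_mul 3)),
      fderiv_fun_sub (f := fun q => -u q) (g := fun q => 3 * v q) (hud p).neg ((hvd p).const_mul 3), fderiv_fun_neg, fderiv_const_mul (hvd p) 3]
    simp [pdxi]
  have G3 : fderiv ℝ (fun q => ((Real.exp (3 * v q - u q) : ℝ) : ℂ)) p (1, 0)
      = ((Real.exp (3 * v p - u p) * (3 * pdxi v p - pdxi u p) : ℝ) : ℂ) := by
    rw [fderiv_ofReal_comp (f := fun q => Real.exp (3 * v q - u q)) ((((hvd p).const_mul 3).sub (hud p)).exp)]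
    rw [fderiv_exp (f := fun q => 3 * v q - u q) (((hvd p).const_mul 3).sub (hud p)),
      fderiv_fun_sub (f := fun q => 3 * v q) ((hvd p).const_mul 3) (hud p), fderiv_const_mul (hvd p) 3]
    simp [pdxi]
  have dE1 : DifferentiableAt ℝ (fun q => ((Real.exp (2 * u q) : ℝ) : ℂ)) p :=
    Complex.ofRealCLM.differentiableAt.comp p (((hud p).const_mul 2).exp)
  have dE2 : DifferentiableAt ℝ (fun q => ((Real.exp (-u q - 3 * v q) : ℝ) : ℂ)) p :=
    Complex.ofRealCLM.differentiableAt.comp p (((hud p).neg.sub ((hvd p).const_mul 3)).exp)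
  have dE3 : DifferentiableAt ℝ (fun q => ((Real.exp (3 * v q - u q) : ℝ) : ℂ)) p :=
    Complex.ofRealCLM.differentiableAt.comp p ((((hvd p).const_mul 3).sub (hud p)).exp)
  have H1 : fderiv ℝ (fun q => lam⁻¹ * ((Real.exp (2 * u q) : ℝ) : ℂ)) p (1, 0)
      = lam⁻¹ * ((Real.exp (2 * u p) * (2 * pdxi u p) : ℝ) : ℂ) := by
    rw [fderiv_const_mul dE1 lam⁻¹]
    simp only [ContinuousLinearMap.smul_apply, smul_eq_mul, G1]
  have H2 : fderiv ℝ (fun q => lam⁻¹ * ((Real.exp (-u q - 3 * v q) : ℝ) : ℂ)) p (1, 0)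
      = lam⁻¹ * ((Real.exp (-u p - 3 * v p) * (-pdxi u p - 3 * pdxi v p) : ℝ) : ℂ) := by
    rw [fderiv_const_mul dE2 lam⁻¹]
    simp only [ContinuousLinearMap.smul_apply, smul_eq_mul, G2]
  have H3 : fderiv ℝ (fun q => lam⁻¹ * ((Real.exp (3 * v q - u q) : ℝ) : ℂ)) p (1, 0)
      = lam⁻¹ * ((Real.exp (3 * v p - u p) * (3 * pdxi v p - pdxi u p) : ℝ) : ℂ) := by
    rw [fderiv_const_mul dE3 lam⁻¹]
    simp only [ContinuousLinearMap.smul_apply, smul_eq_mul, G3]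
  ext i j
  fin_cases i <;> fin_cases j <;>
    simp only [pdtauM, pdxiM, Umat, Vmat, Matrix.of_apply, Matrix.smul_apply,
      Matrix.sub_apply, Matrix.add_apply, Matrix.mul_apply, Fin.sum_univ_three,
      Matrix.cons_val', Matrix.cons_val_zero, Matrix.cons_val_one, Matrix.head_cons,
      Matrix.cons_val_two, Matrix.tail_cons, Matrix.empty_val', Matrix.cons_val_fin_one,
      Matrix.head_fin_const, smul_eq_mul, Fin.isValue, Fin.zero_eta, Fin.mk_one, 
      mul_zero, fderiv_const, fderiv_const_apply, Pi.zero_apply, ContinuousLinearMap.zero_apply,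
      Fin.reduceFinMk, F1, F2, F3, H1, H2, H3] <;>
    push_cast <;> field_simp <;> try ring

/-- the zero-curvature equation `∂_τ U − ∂_ξ V + U·V − V·U = 0` for all
`λ ≠ 0` is equivalent to the light-cone two-component nonlinear Klein–Gordon system. -/
theorem zero_curvature_iff_lightcone
    (u v : ℝ × ℝ → ℝ) (hu : ContDiff ℝ 2 u) (hv : ContDiff ℝ 2 v) :
    (∀ p : ℝ × ℝ, ∀ lam : ℂ, lam ≠ 0 →
        pdtauM (Umat u v lam) p - pdxiM (Vmat u v lam) p
          + Umat u v lam p * Vmat u v lam p - Vmat u v lam p * Umat u v lam p = 0) ↔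
    (∀ p : ℝ × ℝ,
        pdtau (pdxi u) p = Real.exp (2 * u p) - Real.exp (-u p) * Real.cosh (3 * v p) ∧
        pdtau (pdxi v) p = Real.exp (-u p) * Real.sinh (3 * v p)) := by
  have key : ∀ p : ℝ × ℝ,
      (Real.exp (3 * v p - u p) + Real.exp (-u p - 3 * v p)
        = 2 * (Real.exp (-u p) * Real.cosh (3 * v p))) ∧
      (Real.exp (3 * v p - u p) - Real.exp (-u p - 3 * v p)
        = 2 * (Real.exp (-u p) * Real.sinh (3 * v p))) := by
    intro p
    rw [Real.cosh_eq, Real.sinh_eq,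
      show 3 * v p - u p = -u p + 3 * v p by ring,
      show -u p - 3 * v p = -u p + -(3 * v p) by ring, Real.exp_add, Real.exp_add]
    constructor <;> ring
  constructor
  · intro H p
    have h := H p 1 one_ne_zero
    rw [zc_matrix u v hu hv p 1 one_ne_zero] at h
    have h00 := congrFun (congrFun h 0) 0
    have h11 := congrFun (congrFun h 1) 1
    simp only [Matrix.of_apply, Matrix.cons_val', Matrix.cons_val_zero, Matrix.cons_val_one,
      Matrix.head_cons, Matrix.empty_val', Matrix.cons_val_fin_one, Matrix.zero_apply,
      Complex.ofReal_eq_zero] at h00 h11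
    obtain ⟨hc, hs⟩ := key p
    constructor <;> linarith
  · intro H p lam hlam
    rw [zc_matrix u v hu hv p lam hlam]
    obtain ⟨ha, hb⟩ := H p
    obtain ⟨hc, hs⟩ := key p
    ext i j
    fin_cases i <;> fin_cases j <;>
      simp only [Matrix.of_apply, Matrix.cons_val', Matrix.cons_val_zero, Matrix.cons_val_one, Matrix.head_cons,
        Matrix.cons_val_two, Matrix.tail_cons, Matrix.empty_val', Matrix.cons_val_fin_one,
        Matrix.head_fin_const, Matrix.zero_apply, Fin.reduceFinMk, Fin.zero_eta, Fin.mk_one,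
        Complex.ofReal_eq_zero] <;>
      linarith
end

section
/- Let b : ℝ → [0,∞) be integrable, and let K : {(x,y) ∈ ℝ² : x ≤ y} → Matrix (Fin 3) (Fin 3) ℂ be continuous with ‖K(x,y)‖ ≤ b(y) for all x ≤ y, where ‖·‖ is a submultiplicative matrix norm with ‖I‖ = 1 (e.g. the operator norm). Then there exists exactly one bounded continuous function X : ℝ → Matrix (Fin 3) (Fin 3) ℂ satisfying the Volterra integral equation X(x) = I + ∫_x^∞ K(x,y)·X(y) dy for all x ∈ ℝ; moreover this solution satisfies ‖X(x) − I‖ ≤ exp(∫_x^∞ b(y) dy) − 1 for all x ∈ ℝ, so in particular X(x) → I as x → +∞. -/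
open MeasureTheory
open scoped Matrix.Norms.L2Operator

section VolterraAux
open Set
open scoped ENNReal


lemma volterra_keyL (f : ℝ → ℝ≥0∞) (hf : Measurable f) :
    ∀ (n : ℕ) (x : ℝ), ((n : ℝ≥0∞) + 1) * ∫⁻ y in Set.Ioi x, f y * (∫⁻ z in Set.Ioi y, f z) ^ n
      = (∫⁻ y in Set.Ioi x, f y) ^ (n + 1) := by
  set L : ℝ → ℝ≥0∞ := fun x => ∫⁻ y in Set.Ioi x, f y with hLdef
  have hLanti : Antitone L := fun a a' h =>
    lintegral_mono' (Measure.restrict_mono (Set.Ioi_subset_Ioi h) le_rfl) le_rfl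
  have hLmeas : Measurable L := hLanti.measurable
  have hImeas : ∀ n : ℕ, Measurable fun t => ∫⁻ y in Set.Ioi t, f y * L y ^ n := by
    intro n
    have : Antitone fun t => ∫⁻ y in Set.Ioi t, f y * L y ^ n := fun a a' h =>
      lintegral_mono' (Measure.restrict_mono (Set.Ioi_subset_Ioi h) le_rfl) le_rfl
    exact this.measurable
  intro n
  induction n with
  | zero => intro x; simp
  | succ n ih =>
    intro x
    set I : ℕ → ℝ → ℝ≥0∞ := fun m t => ∫⁻ y in Set.Ioi t, f y * L y ^ m with hIdef
    -- the product-region function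
    set W : ℝ × ℝ → ℝ≥0∞ := fun p =>
      Set.indicator {p : ℝ × ℝ | x < p.1 ∧ p.1 < p.2} (fun p => f p.1 * L p.1 ^ n * f p.2) p
      with hWdef
    have hWmeas : Measurable W := by
      apply Measurable.indicator
      · exact ((hf.comp measurable_fst).mul ((hLmeas.comp measurable_fst).pow_const n)).mul
          (hf.comp measurable_snd)
      · exact (measurableSet_lt measurable_const measurable_fst).inter
          (measurableSet_lt measurable_fst measurable_snd)
    -- step A : I (n+1) x as an iterated integral
    have stepA : I (n+1) x = ∫⁻ y, ∫⁻ z, W (y, z) := by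
      have h1 : ∀ y, ∫⁻ z, W (y, z)
          = Set.indicator (Set.Ioi x) (fun y => ∫⁻ z in Set.Ioi y, f y * L y ^ n * f z) y := by
        intro y
        by_cases hy : x < y
        · rw [Set.indicator_of_mem (Set.mem_Ioi.2 hy), ← lintegral_indicator measurableSet_Ioi]
          congr 1
          funext z
          by_cases hz : y < z
          · rw [Set.indicator_of_mem (Set.mem_Ioi.2 hz)]
            exact Set.indicator_of_mem (by exact ⟨hy, hz⟩) _
          · rw [Set.indicator_of_notMem (by simpa using hz)]
            exact Set.indicator_of_notMem (fun h => hz h.2) _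
        · have h0 : ∀ z, W (y, z) = 0 := fun z =>
            Set.indicator_of_notMem (fun h => hy h.1) _
          simp [h0, Set.indicator_of_notMem (show y ∉ Set.Ioi x from hy)]
      calc I (n+1) x = ∫⁻ y in Set.Ioi x, f y * L y ^ n * L y := by
            apply lintegral_congr; intro y; rw [pow_succ, mul_assoc]
        _ = ∫⁻ y in Set.Ioi x, ∫⁻ z in Set.Ioi y, f y * L y ^ n * f z := by
            apply lintegral_congr; intro y
            rw [lintegral_const_mul _ hf]
        _ = ∫⁻ y, Set.indicator (Set.Ioi x)
              (fun y => ∫⁻ z in Set.Ioi y, f y * L y ^ n * f z) y := by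
            rw [lintegral_indicator measurableSet_Ioi]
        _ = ∫⁻ y, ∫⁻ z, W (y, z) := by
            apply lintegral_congr; intro y; rw [h1]
    -- step B : the swapped iterated integral
    have stepB : (∫⁻ z, ∫⁻ y, W (y, z))
        = ∫⁻ z in Set.Ioi x, (∫⁻ y in Set.Ioo x z, f y * L y ^ n) * f z := by
      have h1 : ∀ z, ∫⁻ y, W (y, z)
          = Set.indicator (Set.Ioi x)
              (fun z => (∫⁻ y in Set.Ioo x z, f y * L y ^ n) * f z) z := by
        intro z
        have hW : ∀ y, W (y, z) = Set.indicator (Set.Ioo x z)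
            (fun y => f y * L y ^ n * f z) y := by
          intro y
          simp only [hWdef, Set.indicator_apply, Set.mem_setOf_eq, Set.mem_Ioo]
        by_cases hz : x < z
        · rw [Set.indicator_of_mem (Set.mem_Ioi.2 hz)]
          calc (∫⁻ y, W (y, z)) = ∫⁻ y in Set.Ioo x z, f y * L y ^ n * f z := by
                rw [← lintegral_indicator measurableSet_Ioo]
                exact lintegral_congr hW
            _ = (∫⁻ y in Set.Ioo x z, f y * L y ^ n) * f z := by
                rw [lintegral_mul_const (f := fun y => f y * L y ^ n) _ ((hf.mul (hLmeas.pow_const n)))]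
        · rw [Set.indicator_of_notMem (by simpa using hz)]
          have : Set.Ioo x z = ∅ := Set.Ioo_eq_empty (fun h => hz h)
          calc (∫⁻ y, W (y, z)) = ∫⁻ y in Set.Ioo x z, f y * L y ^ n * f z := by
                rw [← lintegral_indicator measurableSet_Ioo]
                exact lintegral_congr hW
            _ = 0 := by rw [this]; simp
      calc (∫⁻ z, ∫⁻ y, W (y, z))
          = ∫⁻ z, Set.indicator (Set.Ioi x)
              (fun z => (∫⁻ y in Set.Ioo x z, f y * L y ^ n) * f z) z := by
            apply lintegral_congr; intro z; rw [h1]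
        _ = ∫⁻ z in Set.Ioi x, (∫⁻ y in Set.Ioo x z, f y * L y ^ n) * f z := by
            rw [lintegral_indicator measurableSet_Ioi]
    have hswap : (∫⁻ y, ∫⁻ z, W (y, z)) = ∫⁻ z, ∫⁻ y, W (y, z) :=
      lintegral_lintegral_swap hWmeas.aemeasurable
    -- splitting of I n x
    have hsplit : ∀ z, x < z → (∫⁻ y in Set.Ioo x z, f y * L y ^ n) + I n z = I n x := by
      intro z hz
      have hunion : Set.Ioo x z ∪ Set.Ici z = Set.Ioi x := Set.Ioo_union_Ici_eq_Ioi hz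
      have hdisj : Disjoint (Set.Ioo x z) (Set.Ici z) := by
        rw [Set.disjoint_left]; intro y hy hy'; exact absurd hy.2 (not_lt.2 hy')
      have : I n x = (∫⁻ y in Set.Ioo x z, f y * L y ^ n) + ∫⁻ y in Set.Ici z, f y * L y ^ n := by
        rw [hIdef]; dsimp only
        rw [← hunion, lintegral_union measurableSet_Ici hdisj]
      rw [this]
      congr 1
      rw [hIdef]
      dsimp only
      rw [MeasureTheory.restrict_Ioi_eq_restrict_Ici]
    -- the three identities
    have E1 : I (n+1) x + (∫⁻ z in Set.Ioi x, I n z * f z) = I n x * L x := by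
      have hm : Measurable fun z => I n z * f z := (hImeas n).mul hf
      rw [stepA, hswap, stepB, ← lintegral_add_right _ hm]
      calc (∫⁻ z in Set.Ioi x, ((∫⁻ y in Set.Ioo x z, f y * L y ^ n) * f z + I n z * f z))
          = ∫⁻ z in Set.Ioi x, I n x * f z := by
            apply setLIntegral_congr_fun measurableSet_Ioi
            intro z hz
            dsimp only
            rw [← add_mul, hsplit z hz]
        _ = I n x * L x := lintegral_const_mul _ hf
    have E2 : ((n : ℝ≥0∞) + 1) * (∫⁻ z in Set.Ioi x, I n z * f z) = I (n+1) x := by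
      rw [← lintegral_const_mul (f := fun z => I n z * f z) _ ((hImeas n).mul hf)]
      apply lintegral_congr
      intro z
      rw [← mul_assoc, ih z, mul_comm]
    -- conclusion
    have : ((n : ℝ≥0∞) + 1 + 1) * I (n+1) x
        = ((n : ℝ≥0∞) + 1) * (I (n+1) x + (∫⁻ z in Set.Ioi x, I n z * f z)) := by
      rw [mul_add, E2, add_mul, one_mul, add_comm]
    rw [show ((n:ℕ)+1 : ℕ) = n + 1 from rfl]
    push_cast
    rw [this, E1, ← mul_assoc, ih x, ← pow_succ]


lemma volterra_B_anti (b : ℝ → ℝ) (hb_int : Integrable b) (hb_nonneg : ∀ y, 0 ≤ b y) :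
    Antitone (fun x => ∫ y in Set.Ioi x, b y) := by
  intro x x' h
  exact setIntegral_mono_set hb_int.integrableOn
    (ae_restrict_of_ae (ae_of_all _ hb_nonneg))
    (HasSubset.Subset.eventuallyLE (Set.Ioi_subset_Ioi h))

lemma volterra_B_nonneg (b : ℝ → ℝ) (hb_nonneg : ∀ y, 0 ≤ b y) (x : ℝ) :
    0 ≤ ∫ y in Set.Ioi x, b y :=
  setIntegral_nonneg measurableSet_Ioi fun y _ => hb_nonneg y

lemma volterra_B_le (b : ℝ → ℝ) (hb_int : Integrable b) (hb_nonneg : ∀ y, 0 ≤ b y) (x : ℝ) :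
    (∫ y in Set.Ioi x, b y) ≤ ∫ y, b y :=
  setIntegral_le_integral hb_int (ae_of_all _ hb_nonneg)

lemma volterra_keyInt (b : ℝ → ℝ) (hb_int : Integrable b) (hb_nonneg : ∀ y, 0 ≤ b y)
    (n : ℕ) (x : ℝ) :
    IntegrableOn (fun y => b y * (∫ z in Set.Ioi y, b z) ^ n) (Set.Ioi x) := by
  set Bf : ℝ → ℝ := fun t => ∫ y in Set.Ioi t, b y with hBf
  set Btot : ℝ := ∫ y, b y with hBtot
  apply Integrable.mono' ((hb_int.mul_const (Btot ^ n)).integrableOn)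
  · exact hb_int.aestronglyMeasurable.restrict.mul
      (((volterra_B_anti b hb_int hb_nonneg).measurable.pow_const n).aestronglyMeasurable)
  · apply ae_of_all
    intro y
    rw [Real.norm_eq_abs, abs_of_nonneg (mul_nonneg (hb_nonneg y)
      (pow_nonneg (volterra_B_nonneg b hb_nonneg y) n))]
    exact mul_le_mul_of_nonneg_left
      (pow_le_pow_left₀ (volterra_B_nonneg b hb_nonneg y)
        (volterra_B_le b hb_int hb_nonneg y) n) (hb_nonneg y)
lemma volterra_keyR (b : ℝ → ℝ) (hb_int : Integrable b) (hb_nonneg : ∀ y, 0 ≤ b y)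
    (n : ℕ) (x : ℝ) :
    ∫ y in Set.Ioi x, b y * (∫ z in Set.Ioi y, b z) ^ n
      = (∫ y in Set.Ioi x, b y) ^ (n + 1) / (n + 1) := by
  have hbm : AEMeasurable b (volume : Measure ℝ) := hb_int.aemeasurable
  set g : ℝ → ℝ := fun y => max (hbm.mk b y) 0 with hgdef
  have hg_meas : Measurable g := hbm.measurable_mk.max measurable_const
  have hgb : g =ᵐ[volume] b := by
    filter_upwards [hbm.ae_eq_mk] with y hy
    simp [hgdef, ← hy, max_eq_left (hb_nonneg y)]
  have hg_nonneg : ∀ y, 0 ≤ g y := fun y => le_max_right _ _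
  have hg_int : Integrable g := hb_int.congr hgb.symm
  set f : ℝ → ℝ≥0∞ := fun y => ENNReal.ofReal (g y) with hfdef
  have hf : Measurable f := ENNReal.measurable_ofReal.comp hg_meas
  set Bf : ℝ → ℝ := fun t => ∫ y in Set.Ioi t, b y with hBf
  have hB_nonneg : ∀ t, 0 ≤ Bf t := volterra_B_nonneg b hb_nonneg
  have hB_anti : Antitone Bf := volterra_B_anti b hb_int hb_nonneg
  have hLB : ∀ t, (∫⁻ y in Set.Ioi t, f y) = ENNReal.ofReal (Bf t) := by
    intro t
    have h1 : Bf t = ∫ y in Set.Ioi t, g y :=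
      (integral_congr_ae (ae_restrict_of_ae hgb)).symm
    rw [h1, ofReal_integral_eq_lintegral_ofReal hg_int.integrableOn
      (ae_of_all _ fun y => hg_nonneg y)]
  -- step 1 : resolve the real integral as a toReal of a lintegral
  have step1 : ∫ y in Set.Ioi x, b y * Bf y ^ n
      = ENNReal.toReal (∫⁻ y in Set.Ioi x, f y * (∫⁻ z in Set.Ioi y, f z) ^ n) := by
    have h1 : ∫ y in Set.Ioi x, b y * Bf y ^ n = ∫ y in Set.Ioi x, g y * Bf y ^ n := by
      apply integral_congr_ae
      filter_upwards [ae_restrict_of_ae hgb] with y hy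
      rw [hy]
    rw [h1, integral_eq_lintegral_of_nonneg_ae
      (ae_of_all _ fun y => mul_nonneg (hg_nonneg y) (pow_nonneg (hB_nonneg y) n))
      ((hg_meas.mul (hB_anti.measurable.pow_const n)).aestronglyMeasurable)]
    congr 1
    apply lintegral_congr
    intro y
    rw [ENNReal.ofReal_mul (hg_nonneg y), ENNReal.ofReal_pow (hB_nonneg y), hLB y]
  have hkey := volterra_keyL f hf n x
  have hne : (∫⁻ y in Set.Ioi x, f y * (∫⁻ z in Set.Ioi y, f z) ^ n) ≠ ⊤ := by
    intro htop
    rw [htop, ENNReal.mul_top (by simp : ((n : ℝ≥0∞) + 1) ≠ 0)] at hkey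
    rw [hLB x] at hkey
    exact (ENNReal.pow_ne_top ENNReal.ofReal_ne_top) hkey.symm
  have := congrArg ENNReal.toReal hkey
  rw [ENNReal.toReal_mul, hLB x, ENNReal.toReal_pow, ENNReal.toReal_ofReal (hB_nonneg x)] at this
  have hcast : ((n : ℝ≥0∞) + 1).toReal = (n : ℝ) + 1 := by
    rw [ENNReal.toReal_add (by simp) (by simp)]
    simp
  rw [hcast] at this
  rw [step1, ← this]
  have hpos : (0:ℝ) < (n : ℝ) + 1 := by positivity
  field_simp

end VolterraAux

/-- existence and uniqueness of a bounded continuous solution `X` of the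
Volterra integral equation `X(x) = I + ∫_x^∞ K(x,y)·X(y) dy`, together with the bound
`‖X(x) − I‖ ≤ exp(∫_x^∞ b) − 1` and the limit `X(x) → I` as `x → +∞`.  Here
`Matrix (Fin 3) (Fin 3) ℂ` carries the (submultiplicative, unital) `ℓ²`-operator norm. -/
theorem volterra_existence_uniqueness
    (b : ℝ → ℝ) (hb_int : Integrable b) (hb_nonneg : ∀ y, 0 ≤ b y)
    (K : ℝ → ℝ → Matrix (Fin 3) (Fin 3) ℂ)
    (hK_cont : ContinuousOn (fun p : ℝ × ℝ => K p.1 p.2) {p : ℝ × ℝ | p.1 ≤ p.2})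
    (hK_bound : ∀ x y : ℝ, x ≤ y → ‖K x y‖ ≤ b y) :
    ∃ X : ℝ → Matrix (Fin 3) (Fin 3) ℂ,
      (Continuous X ∧ (∃ C : ℝ, ∀ x : ℝ, ‖X x‖ ≤ C) ∧
        (∀ x : ℝ, X x = 1 + ∫ y in Set.Ioi x, K x y * X y)) ∧
      (∀ Y : ℝ → Matrix (Fin 3) (Fin 3) ℂ,
        (Continuous Y ∧ (∃ C : ℝ, ∀ x : ℝ, ‖Y x‖ ≤ C) ∧
          (∀ x : ℝ, Y x = 1 + ∫ y in Set.Ioi x, K x y * Y y)) → Y = X) ∧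
      (∀ x : ℝ, ‖X x - 1‖ ≤ Real.exp (∫ y in Set.Ioi x, b y) - 1) ∧
      Filter.Tendsto X Filter.atTop (nhds 1) := by
  classical
  letI : CompleteSpace (Matrix (Fin 3) (Fin 3) ℂ) := FiniteDimensional.complete ℂ _
  set B : ℝ → ℝ := fun t => ∫ y in Set.Ioi t, b y with hBdef
  set Btot : ℝ := ∫ y, b y with hBtotdef
  have hB_nonneg : ∀ t, 0 ≤ B t := volterra_B_nonneg b hb_nonneg
  have hB_le : ∀ t, B t ≤ Btot := volterra_B_le b hb_int hb_nonneg
  have hBtot_nonneg : 0 ≤ Btot := integral_nonneg hb_nonneg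
  -- continuity of sections of the kernel
  have hKy : ∀ (Z : ℝ → Matrix (Fin 3) (Fin 3) ℂ), Continuous Z → ∀ x : ℝ,
      ContinuousOn (fun y => K x y * Z y) (Set.Ioi x) := by
    intro Z hZ x
    apply ContinuousOn.mul _ hZ.continuousOn
    apply hK_cont.comp (Continuous.continuousOn (continuous_const.prodMk continuous_id))
    intro y hy
    exact le_of_lt (show x < y from hy)
  -- integrability of the integrand
  have hIntOn : ∀ (Z : ℝ → Matrix (Fin 3) (Fin 3) ℂ) (C : ℝ), Continuous Z →
      (∀ y, ‖Z y‖ ≤ C) → ∀ x : ℝ, IntegrableOn (fun y => K x y * Z y) (Set.Ioi x) := by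
    intro Z C hZ hC x
    apply Integrable.mono' ((hb_int.mul_const C).integrableOn)
      ((hKy Z hZ x).aestronglyMeasurable measurableSet_Ioi)
    filter_upwards [ae_restrict_mem measurableSet_Ioi] with y hy
    calc ‖K x y * Z y‖ ≤ ‖K x y‖ * ‖Z y‖ := norm_mul_le _ _
      _ ≤ b y * C := mul_le_mul (hK_bound x y (le_of_lt hy)) (hC y) (norm_nonneg _) (hb_nonneg y)
  -- the master estimate
  have hmaster : ∀ (Z : ℝ → Matrix (Fin 3) (Fin 3) ℂ) (ψ : ℝ → ℝ) (x : ℝ),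
      IntegrableOn (fun y => b y * ψ y) (Set.Ioi x) → (∀ y, ‖Z y‖ ≤ ψ y) →
      ‖∫ y in Set.Ioi x, K x y * Z y‖ ≤ ∫ y in Set.Ioi x, b y * ψ y := by
    intro Z ψ x hint hZψ
    apply norm_integral_le_of_norm_le hint
    filter_upwards [ae_restrict_mem measurableSet_Ioi] with y hy
    calc ‖K x y * Z y‖ ≤ ‖K x y‖ * ‖Z y‖ := norm_mul_le _ _
      _ ≤ b y * ψ y := mul_le_mul (hK_bound x y (le_of_lt hy)) (hZψ y) (norm_nonneg _) (hb_nonneg y)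
  -- continuity of the integral transform
  have hTcont : ∀ (Z : ℝ → Matrix (Fin 3) (Fin 3) ℂ) (C : ℝ), Continuous Z → (∀ y, ‖Z y‖ ≤ C) →
      Continuous fun x => ∫ y in Set.Ioi x, K x y * Z y := by
    intro Z C hZ hC
    have hC0 : 0 ≤ C := le_trans (norm_nonneg _) (hC 0)
    rw [continuous_iff_continuousAt]
    intro x
    have key : Filter.Tendsto
        (fun x' => ∫ y, Set.indicator (Set.Ioi x') (fun y => K x' y * Z y) y)
        (nhds x) (nhds (∫ y, Set.indicator (Set.Ioi x) (fun y => K x y * Z y) y)) := by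
      apply tendsto_integral_filter_of_dominated_convergence (bound := fun y => b y * C)
      · filter_upwards with x'
        exact (aestronglyMeasurable_indicator_iff measurableSet_Ioi).2
          ((hKy Z hZ x').aestronglyMeasurable measurableSet_Ioi)
      · filter_upwards with x'
        filter_upwards with y
        by_cases hy : y ∈ Set.Ioi x'
        · rw [Set.indicator_of_mem hy]
          calc ‖K x' y * Z y‖ ≤ ‖K x' y‖ * ‖Z y‖ := norm_mul_le _ _
            _ ≤ b y * C := mul_le_mul (hK_bound x' y (le_of_lt hy)) (hC y)
                (norm_nonneg _) (hb_nonneg y)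
        · rw [Set.indicator_of_notMem hy]
          simpa using mul_nonneg (hb_nonneg y) hC0
      · exact hb_int.mul_const C
      · have hx : ∀ᵐ (y : ℝ), y ≠ x := by
          rw [ae_iff]
          have h1 : {y : ℝ | ¬ y ≠ x} = {x} := by ext y; simp
          rw [h1]
          exact measure_singleton x
        filter_upwards [hx] with y hy
        rcases lt_or_gt_of_ne hy with hlt | hgt
        · have hev : ∀ᶠ x' in nhds x,
              Set.indicator (Set.Ioi x') (fun y => K x' y * Z y) y = 0 := by
            filter_upwards [eventually_gt_nhds hlt] with x' hx'
            exact Set.indicator_of_notMem (by simpa using le_of_lt hx') _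
          rw [Set.indicator_of_notMem (by simpa using le_of_lt hlt)]
          exact tendsto_const_nhds.congr' (by filter_upwards [hev] with x' h; exact h.symm)
        · have hev : ∀ᶠ x' in nhds x,
              Set.indicator (Set.Ioi x') (fun y => K x' y * Z y) y = K x' y * Z y := by
            filter_upwards [eventually_lt_nhds hgt] with x' hx'
            exact Set.indicator_of_mem hx' _
          rw [Set.indicator_of_mem (Set.mem_Ioi.2 hgt)]
          have hmem : {p : ℝ × ℝ | p.1 ≤ p.2} ∈ nhds (x, y) := by
            apply Filter.mem_of_superset (IsOpen.mem_nhds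
              (isOpen_lt continuous_fst continuous_snd)
              (show (x, y) ∈ {p : ℝ × ℝ | p.1 < p.2} from hgt))
            intro p hp
            simp only [Set.mem_setOf_eq] at hp ⊢
            exact le_of_lt hp
          have h1 : ContinuousAt (fun p : ℝ × ℝ => K p.1 p.2) (x, y) :=
            hK_cont.continuousAt hmem
          have h2 : ContinuousAt (fun x' : ℝ => K x' y) x := by
            have h3 : Filter.Tendsto (fun x' : ℝ => ((x' : ℝ), y)) (nhds x) (nhds (x, y)) :=
              Continuous.tendsto (continuous_id.prodMk continuous_const) x
            exact Filter.Tendsto.comp h1 h3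
          exact (h2.mul continuousAt_const).congr'
            (by filter_upwards [hev] with x' h; exact h.symm)
    have hrepr : ∀ x' : ℝ, ∫ y in Set.Ioi x', K x' y * Z y
        = ∫ y, Set.indicator (Set.Ioi x') (fun y => K x' y * Z y) y :=
      fun x' => (integral_indicator measurableSet_Ioi).symm
    have key2 := key.congr fun x' => (hrepr x').symm
    rw [← hrepr x] at key2
    exact key2
  -- the fixed point operator
  set T : BoundedContinuousFunction ℝ (Matrix (Fin 3) (Fin 3) ℂ) →
      BoundedContinuousFunction ℝ (Matrix (Fin 3) (Fin 3) ℂ) := fun Z =>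
    BoundedContinuousFunction.ofNormedAddCommGroup
      (fun x => 1 + ∫ y in Set.Ioi x, K x y * Z y)
      (continuous_const.add (hTcont Z ‖Z‖ Z.continuous Z.norm_coe_le_norm))
      (1 + ‖Z‖ * Btot)
      (fun x => by
        have h1 : ‖∫ y in Set.Ioi x, K x y * Z y‖ ≤ ∫ y in Set.Ioi x, b y * ‖Z‖ :=
          hmaster Z (fun _ => ‖Z‖) x ((hb_int.mul_const _).integrableOn) Z.norm_coe_le_norm
        have h2 : ∫ y in Set.Ioi x, b y * ‖Z‖ = B x * ‖Z‖ := integral_mul_const _ _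
        have h3 : B x * ‖Z‖ ≤ Btot * ‖Z‖ :=
          mul_le_mul_of_nonneg_right (hB_le x) (norm_nonneg _)
        calc ‖1 + ∫ y in Set.Ioi x, K x y * Z y‖
            ≤ ‖(1 : Matrix (Fin 3) (Fin 3) ℂ)‖ + ‖∫ y in Set.Ioi x, K x y * Z y‖ :=
              norm_add_le _ _
          _ ≤ 1 + ‖Z‖ * Btot := by
              rw [norm_one]
              have := le_trans h1 (le_of_eq h2)
              nlinarith [le_trans this h3]) with hTdef
  have hTapp : ∀ Z x, T Z x = 1 + ∫ y in Set.Ioi x, K x y * Z y := fun Z x => rfl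
  -- difference formula
  have hdiff : ∀ (Z W : BoundedContinuousFunction ℝ (Matrix (Fin 3) (Fin 3) ℂ)) (x : ℝ),
      T Z x - T W x = ∫ y in Set.Ioi x, K x y * (Z y - W y) := by
    intro Z W x
    rw [hTapp, hTapp, add_sub_add_left_eq_sub,
      ← integral_sub (hIntOn Z ‖Z‖ Z.continuous Z.norm_coe_le_norm x)
        (hIntOn W ‖W‖ W.continuous W.norm_coe_le_norm x)]
    apply integral_congr_ae
    filter_upwards with y
    rw [mul_sub]
  -- bound on iterates
  have hiter : ∀ (n : ℕ) (Z W : BoundedContinuousFunction ℝ (Matrix (Fin 3) (Fin 3) ℂ)) (x : ℝ),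
      ‖(T^[n] Z) x - (T^[n] W) x‖ ≤ dist Z W * B x ^ n / (n.factorial : ℝ) := by
    intro n
    induction n with
    | zero =>
      intro Z W x
      simp only [Function.iterate_zero, id_eq, pow_zero, Nat.factorial_zero, Nat.cast_one,
        mul_one, div_one]
      rw [← dist_eq_norm]
      exact BoundedContinuousFunction.dist_coe_le_dist x
    | succ n ih =>
      intro Z W x
      rw [Function.iterate_succ_apply', Function.iterate_succ_apply', hdiff]
      have hint : IntegrableOn
          (fun y => b y * (dist Z W * B y ^ n / (n.factorial : ℝ))) (Set.Ioi x) := by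
        have h1 : (fun y => b y * (dist Z W * B y ^ n / (n.factorial : ℝ)))
            = fun y => (dist Z W / (n.factorial : ℝ)) * (b y * B y ^ n) := by
          funext y; ring
        rw [h1]
        exact (volterra_keyInt b hb_int hb_nonneg n x).const_mul _
      have hm := hmaster (fun y => (T^[n] Z) y - (T^[n] W) y)
        (fun y => dist Z W * B y ^ n / (n.factorial : ℝ)) x hint (fun y => ih Z W y)
      refine le_trans hm (le_of_eq ?_)
      have h1 : (fun y => b y * (dist Z W * B y ^ n / (n.factorial : ℝ)))
          = fun y => (dist Z W / (n.factorial : ℝ)) * (b y * B y ^ n) := by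
        funext y; ring
      rw [h1, integral_const_mul, volterra_keyR b hb_int hb_nonneg n x, Nat.factorial_succ]
      push_cast
      rw [div_mul_div_comm, mul_comm ((n.factorial : ℝ)) ((n : ℝ) + 1)]
  -- the Lipschitz bound for iterates
  have hlip : ∀ (n : ℕ) (Z W : BoundedContinuousFunction ℝ (Matrix (Fin 3) (Fin 3) ℂ)),
      dist (T^[n] Z) (T^[n] W) ≤ Btot ^ n / (n.factorial : ℝ) * dist Z W := by
    intro n Z W
    rw [BoundedContinuousFunction.dist_le (by positivity)]
    intro x
    rw [dist_eq_norm]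
    refine le_trans (hiter n Z W x) ?_
    have h3 : Btot ^ n / (n.factorial : ℝ) * dist Z W = dist Z W * Btot ^ n / (n.factorial : ℝ) := by
      ring
    rw [h3]
    gcongr
    all_goals first
      | exact dist_nonneg
      | exact hB_nonneg x
      | exact hB_le x
  -- a contracting iterate
  obtain ⟨n₀, hn₀⟩ : ∃ n : ℕ, Btot ^ n / (n.factorial : ℝ) < 1 :=
    ((FloorSemiring.tendsto_pow_div_factorial_atTop Btot).eventually_lt_const
      (by norm_num : (0:ℝ) < 1)).exists
  set κ : NNReal := Real.toNNReal (Btot ^ n₀ / (n₀.factorial : ℝ)) with hκdef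
  have hκ1 : κ < 1 := by
    rw [hκdef]
    exact Real.toNNReal_lt_one.2 hn₀
  have hκcoe : (κ : ℝ) = Btot ^ n₀ / (n₀.factorial : ℝ) := Real.coe_toNNReal _ (by positivity)
  have hcontr : ContractingWith κ (T^[n₀]) := by
    refine ⟨hκ1, LipschitzWith.of_dist_le_mul fun Z W => ?_⟩
    rw [hκcoe]
    exact hlip n₀ Z W
  set Xb : BoundedContinuousFunction ℝ (Matrix (Fin 3) (Fin 3) ℂ) :=
    ContractingWith.fixedPoint (T^[n₀]) hcontr with hXbdef
  have hXfix' : T^[n₀] Xb = Xb := hcontr.fixedPoint_isFixedPt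
  have hXfix : T Xb = Xb := by
    have h1 : T^[n₀] (T Xb) = T Xb := by
      rw [← Function.iterate_succ_apply, Function.iterate_succ_apply', hXfix']
    exact hcontr.fixedPoint_unique h1
  have hXeq : ∀ x, Xb x = 1 + ∫ y in Set.Ioi x, K x y * Xb y := by
    intro x
    have h : T Xb x = Xb x := by rw [hXfix]
    rw [hTapp] at h
    exact h.symm
  -- the exponential bound
  have hbound : ∀ x, ‖Xb x - 1‖ ≤ Real.exp (B x) - 1 := by
    set Y0 : BoundedContinuousFunction ℝ (Matrix (Fin 3) (Fin 3) ℂ) :=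
      BoundedContinuousFunction.const ℝ (1 : Matrix (Fin 3) (Fin 3) ℂ) with hY0def
    have hφ : ∀ (m : ℕ) (t : ℝ), ‖(T^[m] Y0) t - 1‖
        ≤ ∑ k ∈ Finset.range m, B t ^ (k+1) / (((k+1).factorial : ℝ)) := by
      intro m
      induction m with
      | zero => intro t; simp [hY0def]
      | succ m ih =>
        intro t
        rw [Function.iterate_succ_apply', hTapp, add_sub_cancel_left]
        have hrw : (fun y => b y * (1 + ∑ k ∈ Finset.range m, B y ^ (k+1) / (((k+1).factorial : ℝ))))
            = fun y => b y + ∑ k ∈ Finset.range m,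
                (((k+1).factorial : ℝ))⁻¹ * (b y * B y ^ (k+1)) := by
          funext y
          rw [mul_add, mul_one, Finset.mul_sum]
          congr 1
          refine Finset.sum_congr rfl fun k _ => by ring
        have hint : IntegrableOn
            (fun y => b y * (1 + ∑ k ∈ Finset.range m, B y ^ (k+1) / (((k+1).factorial : ℝ))))
            (Set.Ioi t) := by
          rw [hrw]
          exact hb_int.integrableOn.add (integrable_finset_sum _ fun k _ =>
            (volterra_keyInt b hb_int hb_nonneg (k+1) t).const_mul _)
        have hbd : ∀ y, ‖(T^[m] Y0) y‖
            ≤ 1 + ∑ k ∈ Finset.range m, B y ^ (k+1) / (((k+1).factorial : ℝ)) := by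
          intro y
          have h1 : ‖(T^[m] Y0) y‖ ≤ ‖(T^[m] Y0) y - 1‖ + ‖(1 : Matrix (Fin 3) (Fin 3) ℂ)‖ := by
            have := norm_add_le ((T^[m] Y0) y - 1) 1
            rwa [sub_add_cancel] at this
          rw [norm_one] at h1
          refine le_trans h1 ?_
          have := ih y
          linarith
        have hm := hmaster (fun y => (T^[m] Y0) y)
          (fun y => 1 + ∑ k ∈ Finset.range m, B y ^ (k+1) / (((k+1).factorial : ℝ))) t hint hbd
        refine le_trans hm (le_of_eq ?_)
        rw [hrw, integral_add hb_int.integrableOn (integrable_finset_sum _ fun k _ =>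
          (volterra_keyInt b hb_int hb_nonneg (k+1) t).const_mul _),
          integral_finset_sum _ fun k _ => (volterra_keyInt b hb_int hb_nonneg (k+1) t).const_mul _]
        rw [Finset.sum_range_succ']
        have hterm : ∀ k ∈ Finset.range m,
            (((k+1).factorial : ℝ))⁻¹ * ∫ y in Set.Ioi t, b y * B y ^ (k+1)
              = B t ^ (k+1+1) / (((k+1+1).factorial : ℝ)) := by
          intro k _
          rw [volterra_keyR b hb_int hb_nonneg (k+1) t, Nat.factorial_succ (k+1)]
          push_cast
          rw [inv_mul_eq_div, div_div]
        rw [Finset.sum_congr rfl fun k hk => by rw [integral_const_mul]]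
        rw [Finset.sum_congr rfl hterm]
        simp [Nat.factorial]
        ring
    have hexp : ∀ (m : ℕ) (t : ℝ),
        ∑ k ∈ Finset.range m, B t ^ (k+1) / (((k+1).factorial : ℝ)) ≤ Real.exp (B t) - 1 := by
      intro m t
      have h1 := Real.sum_le_exp_of_nonneg (hB_nonneg t) (m+1)
      rw [Finset.sum_range_succ'] at h1
      simp only [pow_zero, Nat.factorial_zero, Nat.cast_one, div_one] at h1
      linarith
    intro x
    have hXm : ∀ m : ℕ, ‖Xb x - 1‖
        ≤ dist Xb Y0 * Btot ^ m / (m.factorial : ℝ) + (Real.exp (B x) - 1) := by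
      intro m
      have hfm : T^[m] Xb = Xb := Function.IsFixedPt.iterate hXfix m
      have h1 : ‖Xb x - (T^[m] Y0) x‖ ≤ dist Xb Y0 * B x ^ m / (m.factorial : ℝ) := by
        have := hiter m Xb Y0 x
        rwa [hfm] at this
      have h2 : ‖(T^[m] Y0) x - 1‖ ≤ Real.exp (B x) - 1 := le_trans (hφ m x) (hexp m x)
      have h3 : ‖Xb x - 1‖ ≤ ‖Xb x - (T^[m] Y0) x‖ + ‖(T^[m] Y0) x - 1‖ := by
        have := dist_triangle (Xb x) ((T^[m] Y0) x) (1 : Matrix (Fin 3) (Fin 3) ℂ)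
        simpa [dist_eq_norm] using this
      have h4 : dist Xb Y0 * B x ^ m / (m.factorial : ℝ)
          ≤ dist Xb Y0 * Btot ^ m / (m.factorial : ℝ) := by
        gcongr
        all_goals first
          | exact dist_nonneg
          | exact hB_nonneg x
          | exact hB_le x
      linarith
    have htend : Filter.Tendsto
        (fun m : ℕ => dist Xb Y0 * Btot ^ m / (m.factorial : ℝ) + (Real.exp (B x) - 1))
        Filter.atTop (nhds (0 + (Real.exp (B x) - 1))) := by
      apply Filter.Tendsto.add_const
      have h0 := (FloorSemiring.tendsto_pow_div_factorial_atTop (K := ℝ) Btot).const_mul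
        (dist Xb Y0)
      rw [mul_zero] at h0
      refine h0.congr fun m => ?_
      ring
    have := ge_of_tendsto' htend hXm
    simpa using this
  refine ⟨⇑Xb, ⟨Xb.continuous, ⟨‖Xb‖, Xb.norm_coe_le_norm⟩, hXeq⟩, ?_, hbound, ?_⟩
  · rintro Y ⟨hYc, ⟨C, hYC⟩, hYeq⟩
    set Yb := BoundedContinuousFunction.ofNormedAddCommGroup Y hYc C hYC with hYbdef
    have hYcoe : ⇑Yb = Y := rfl
    have hfix : Function.IsFixedPt T Yb := by
      apply BoundedContinuousFunction.ext
      intro x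
      rw [hTapp]
      exact (hYeq x).symm
    have h1 : Yb = Xb := hcontr.fixedPoint_unique (hfix.iterate n₀)
    rw [← hYcoe, h1]
  · have hB0 : Filter.Tendsto B Filter.atTop (nhds 0) := by
      have key := tendsto_integral_filter_of_dominated_convergence (μ := (volume : Measure ℝ))
        (l := Filter.atTop) (F := fun (t : ℝ) y => Set.indicator (Set.Ioi t) b y)
        (f := fun _ => (0 : ℝ)) (bound := fun y => |b y|)
        (by filter_upwards with t
            exact hb_int.aestronglyMeasurable.indicator measurableSet_Ioi)
        (by filter_upwards with t
            filter_upwards with y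
            by_cases hy : y ∈ Set.Ioi t
            · rw [Set.indicator_of_mem hy, Real.norm_eq_abs]
            · rw [Set.indicator_of_notMem hy]; simp)
        hb_int.abs
        (by filter_upwards with y
            have hev : ∀ᶠ t in Filter.atTop, Set.indicator (Set.Ioi t) b y = 0 := by
              filter_upwards [Filter.eventually_ge_atTop y] with t ht
              exact Set.indicator_of_notMem (by simpa using ht) _
            exact tendsto_const_nhds.congr'
              (by filter_upwards [hev] with t ht; exact ht.symm))
      rw [integral_zero] at key
      have hrepr : ∀ t : ℝ, B t = ∫ y, Set.indicator (Set.Ioi t) b y :=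
        fun t => (integral_indicator measurableSet_Ioi).symm
      exact key.congr fun t => (hrepr t).symm
    have hexp0 : Filter.Tendsto (fun t => Real.exp (B t) - 1) Filter.atTop (nhds 0) := by
      have h1 : Filter.Tendsto (fun t => Real.exp (B t)) Filter.atTop (nhds (Real.exp 0)) :=
        (Real.continuous_exp.tendsto 0).comp hB0
      have h2 := h1.sub_const 1
      simpa using h2
    rw [tendsto_iff_dist_tendsto_zero]
    refine squeeze_zero (fun t => dist_nonneg) (fun t => ?_) hexp0
    rw [dist_eq_norm]
    exact hbound t
end
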